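/- arXiv:cond-mat/9411116 — 7 statements merged into one kernel-verified Lean document; each statement's English description precedes it below -/
import Mathlib

section
/- Let E(p) = |p|² on ℝ^d, β > 0, and 0 < z < 1. Then the function R̂(p) = 2·∑_{n=1}^∞ z^n·exp(-β·n·|p|²) belongs to the Schwartz space S(ℝ^d), and its inverse Fourier transform R(x) is strictly positive for every x ∈ ℝ^d. -/
/-!
Write `G(p) = exp (-β ‖p‖²)`. The series is geometric: `R̂ = 2 z G / (1 - z G)`. The Gaussian `G`
is a Schwartz function (Faà di Bruno, and `(1 + t)ᵐ exp (-c t²) ≤ exp (m² / 4c)`), and since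
`z G ≤ z < 1` the factor `(1 - z G)⁻¹` has temperate growth, so `R̂` is a Schwartz function.
Each term `2 zⁿ⁺¹ exp (-β (n + 1) ‖p‖²)` is a Gaussian whose inverse Fourier transform is a
positive Gaussian, and the series converges in `L¹`, so the inverse Fourier transform of `R̂`
is a convergent sum of positive numbers.
-/

open MeasureTheory Real

open Function SchwartzMap
open scoped Nat FourierTransform RealInnerProductSpace

namespace Real

lemma one_add_pow_mul_exp_neg_mul_sq_le {c t : ℝ} (hc : 0 < c) (ht : 0 ≤ t) (m : ℕ) :
    (1 + t) ^ m * exp (-c * t ^ 2) ≤ exp (m ^ 2 / (4 * c)) := by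
  calc (1 + t) ^ m * exp (-c * t ^ 2) ≤ exp t ^ m * exp (-c * t ^ 2) := by
        gcongr
        linarith [add_one_le_exp t]
    _ = exp (m * t - c * t ^ 2) := by rw [← exp_nat_mul, ← exp_add]; ring_nf
    _ ≤ exp (m ^ 2 / (4 * c)) := by
        gcongr
        rw [le_div_iff₀ (by positivity)]
        nlinarith [sq_nonneg (m - 2 * c * t)]

lemma norm_iteratedFDeriv_exp (n : ℕ) (y : ℝ) : ‖iteratedFDeriv ℝ n exp y‖ = exp y := by
  rw [norm_iteratedFDeriv_eq_norm_iteratedDeriv, iteratedDeriv_eq_iterate, Real.iter_deriv_exp,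
    norm_of_nonneg (exp_pos y).le]

end Real

lemma norm_iteratedDeriv_one_sub_inv {w : ℝ} (hw : w < 1) (n : ℕ) :
    ‖iteratedDeriv n (fun w : ℝ => (1 - w)⁻¹) w‖ = n ! / (1 - w) ^ (n + 1) := by
  have hlin : (fun w : ℝ => (1 - w)⁻¹) = fun w => (-1 * w + 1)⁻¹ := by ext w; ring_nf
  have hsign : ((-1 : ℝ)) ^ n * (-1) ^ n = 1 := by rw [← mul_pow]; norm_num
  rw [hlin, iteratedDeriv_eq_iterate, iter_deriv_inv_linear]
  beta_reduce
  rw [show (-1 - n : ℤ) = -((n + 1 : ℕ) : ℤ) by push_cast; ring, zpow_neg, zpow_natCast,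
    show -1 * w + 1 = 1 - w by ring, mul_right_comm _ _ ((-1 : ℝ) ^ n), hsign, one_mul,
    ← div_eq_mul_inv, norm_of_nonneg (by have := sub_pos.2 hw; positivity)]

namespace Function.HasTemperateGrowth

variable {E : Type*} [NormedAddCommGroup E] [NormedSpace ℝ E]

lemma norm_iteratedFDeriv_exp_comp_le {f : E → ℝ} (hf : f.HasTemperateGrowth) (n : ℕ) :
    ∃ (k : ℕ) (C : ℝ), 0 ≤ C ∧
      ∀ x, ‖iteratedFDeriv ℝ n (fun x => exp (f x)) x‖ ≤ C * (1 + ‖x‖) ^ k * exp (f x) := by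
  obtain ⟨k, C, hC, hbound⟩ := hf.norm_iteratedFDeriv_le_uniform n
  refine ⟨k * n, n ! * (1 + C) ^ n, by positivity, fun x => ?_⟩
  set D := (1 + C) * (1 + ‖x‖) ^ k
  have hD : 1 ≤ D := one_le_mul_of_one_le_of_one_le (by linarith)
    (one_le_pow₀ (by linarith [norm_nonneg x]))
  have hfD (i : ℕ) (hi : 1 ≤ i) (hin : i ≤ n) : ‖iteratedFDeriv ℝ i f x‖ ≤ D ^ i := calc
    _ ≤ C * (1 + ‖x‖) ^ k := hbound i hin x
    _ ≤ (1 + C) * (1 + ‖x‖) ^ k := by gcongr; linarith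
    _ ≤ D ^ i := le_self_pow₀ hD (by omega)
  calc ‖iteratedFDeriv ℝ n (exp ∘ f) x‖ ≤ n ! * exp (f x) * D ^ n :=
        norm_iteratedFDeriv_comp_le contDiff_exp hf.1 (mod_cast le_top) x
          (fun i _ => (norm_iteratedFDeriv_exp i (f x)).le) hfD
    _ = n ! * (1 + C) ^ n * (1 + ‖x‖) ^ (k * n) * exp (f x) := by
        rw [mul_pow, ← pow_mul]; ring

lemma one_sub_inv {f : E → ℝ} (hf : f.HasTemperateGrowth) {a : ℝ} (ha : a < 1)
    (hfa : ∀ x, f x ≤ a) : (fun x => (1 - f x)⁻¹).HasTemperateGrowth := by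
  set b := (1 + a) / 2
  have hb : b < 1 := by simp only [b]; linarith
  refine hf.comp' (g := fun w : ℝ => (1 - w)⁻¹) (t := Set.Iio b) ?_ isOpen_Iio.uniqueDiffOn ?_ ?_
  · rintro _ ⟨x, rfl⟩
    exact (hfa x).trans_lt (by simp only [b]; linarith)
  · exact (contDiffOn_const.sub contDiffOn_id).inv fun w hw =>
      (sub_pos.2 ((show w < b from hw).trans hb)).ne'
  · intro N
    refine ⟨0, ∑ n ∈ Finset.range (N + 1), n ! / (1 - b) ^ (n + 1),
      Finset.sum_nonneg fun n _ => by have := sub_pos.2 hb; positivity, fun n hn w hw => ?_⟩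
    have hwb : w < b := hw
    rw [iteratedFDerivWithin_of_isOpen _ isOpen_Iio hw, norm_iteratedFDeriv_eq_norm_iteratedDeriv,
      norm_iteratedDeriv_one_sub_inv (hwb.trans hb), pow_zero, mul_one]
    calc (n ! : ℝ) / (1 - w) ^ (n + 1) ≤ n ! / (1 - b) ^ (n + 1) := by
          gcongr
      _ ≤ _ := Finset.single_le_sum (f := fun n => (n ! : ℝ) / (1 - b) ^ (n + 1))
          (fun i _ => by have := sub_pos.2 hb; positivity) (Finset.mem_range.2 (by omega))

end Function.HasTemperateGrowth

lemma two_mul_tsum_pow_succ_mul_exp {β z s : ℝ} (hz0 : 0 ≤ z) (hz1 : z < 1) (hβs : 0 ≤ β * s) :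
    2 * ∑' n : ℕ, z ^ (n + 1) * exp (-β * ((n : ℝ) + 1) * s)
      = (1 - z * exp (-β * s))⁻¹ * (2 * z * exp (-β * s)) := by
  set r := z * exp (-β * s)
  have hr1 : r < 1 := calc
    z * exp (-β * s) ≤ z * 1 := by gcongr; rw [exp_le_one_iff]; linarith
    _ < 1 := by linarith
  have hterm (n : ℕ) : z ^ (n + 1) * exp (-β * ((n : ℝ) + 1) * s) = r ^ n * r := by
    rw [← pow_succ, mul_pow, ← exp_nat_mul]; push_cast; ring_nf
  rw [tsum_congr hterm, tsum_mul_right, tsum_geometric_of_lt_one (by positivity) hr1]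
  ring

section Schwartz

variable {V : Type*} [NormedAddCommGroup V] [InnerProductSpace ℝ V]

noncomputable def gaussianSchwartzMap {c : ℝ} (hc : 0 < c) : 𝓢(V, ℝ) where
  toFun x := exp (-c * ‖x‖ ^ 2)
  smooth' := contDiff_exp.comp (contDiff_const.mul (contDiff_norm_sq ℝ))
  decay' k n := by
    obtain ⟨m, C, hC, hbound⟩ :=
      (by fun_prop : HasTemperateGrowth fun x : V => -c * ‖x‖ ^ 2).norm_iteratedFDeriv_exp_comp_le n
    refine ⟨C * exp ((k + m : ℕ) ^ 2 / (4 * c)), fun x => ?_⟩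
    calc ‖x‖ ^ k * ‖iteratedFDeriv ℝ n (fun x => exp (-c * ‖x‖ ^ 2)) x‖
        ≤ (1 + ‖x‖) ^ k * (C * (1 + ‖x‖) ^ m * exp (-c * ‖x‖ ^ 2)) := by
          gcongr
          · linarith
          · exact hbound x
      _ = C * ((1 + ‖x‖) ^ (k + m) * exp (-c * ‖x‖ ^ 2)) := by ring
      _ ≤ C * exp ((k + m : ℕ) ^ 2 / (4 * c)) := by
          gcongr
          exact one_add_pow_mul_exp_neg_mul_sq_le hc (norm_nonneg x) _

@[simp]
lemma gaussianSchwartzMap_apply {c : ℝ} (hc : 0 < c) (x : V) :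
    gaussianSchwartzMap hc x = exp (-c * ‖x‖ ^ 2) := rfl

theorem exists_schwartzMap_eq_two_mul_tsum {β z : ℝ} (hβ : 0 < β) (hz0 : 0 < z) (hz1 : z < 1) :
    ∃ R : 𝓢(V, ℝ), ∀ p, R p = 2 * ∑' n : ℕ, z ^ (n + 1) * exp (-β * ((n : ℝ) + 1) * ‖p‖ ^ 2) := by
  set G : 𝓢(V, ℝ) := gaussianSchwartzMap hβ
  have hG (p : V) : z * G p ≤ z := by
    simpa [G] using mul_le_of_le_one_right hz0.le (exp_le_one_iff.2 (by nlinarith [norm_nonneg p]))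
  have hinv : HasTemperateGrowth fun p => (1 - z * G p)⁻¹ :=
    ((HasTemperateGrowth.const z).mul G.hasTemperateGrowth).one_sub_inv hz1 hG
  refine ⟨smulLeftCLM ℝ (fun p => (1 - z * G p)⁻¹) ((2 * z) • G), fun p => ?_⟩
  rw [smulLeftCLM_apply_apply hinv, two_mul_tsum_pow_succ_mul_exp hz0.le hz1 (by positivity)]
  simp [G, mul_assoc]

end Schwartz

section Fourier

variable {V : Type*} [NormedAddCommGroup V] [InnerProductSpace ℝ V] [FiniteDimensional ℝ V]
  [MeasurableSpace V] [BorelSpace V]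

lemma hasSum_fourierInv {ι : Type*} [Countable ι] {F : ι → V → ℂ} (hint : ∀ i, Integrable (F i))
    (hsum : Summable fun i => ∫ v, ‖F i v‖) (x : V) :
    HasSum (fun i => 𝓕⁻ (F i) x) (𝓕⁻ (fun v => ∑' i, F i v) x) := by
  simp only [Real.fourierInv_eq, Circle.smul_def, smul_eq_mul, ← tsum_mul_left]
  refine hasSum_integral_of_summable_integral_norm (fun i => ?_)
    (by simpa [Circle.norm_coe] using hsum)
  simpa [Circle.smul_def] using (Real.fourierIntegral_convergent_iff (-x)).2 (hint i)

lemma fourierInv_const_mul_gaussian (a : ℝ) {b : ℝ} (hb : 0 < b) (x : V) :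
    𝓕⁻ (fun v : V => ((a * exp (-b * ‖v‖ ^ 2) : ℝ) : ℂ)) x
      = ((a * ((π / b) ^ ((Module.finrank ℝ V : ℝ) / 2) * exp (-π ^ 2 * ‖x‖ ^ 2 / b)) : ℝ) : ℂ) := by
  have hgauss := fourier_gaussian_innerProductSpace (V := V) (b := (b : ℂ)) (by simpa using hb) (-x)
  rw [← Real.fourierInv_eq_fourier_neg, Real.fourierInv_eq, norm_neg] at hgauss
  have hfun (v : V) : 𝐞 ⟪v, x⟫ • ((a * exp (-b * ‖v‖ ^ 2) : ℝ) : ℂ)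
      = a * 𝐞 ⟪v, x⟫ • Complex.exp (-b * ‖v‖ ^ 2) := by
    push_cast
    exact (mul_smul_comm _ _ _).symm
  rw [Real.fourierInv_eq, funext hfun, integral_const_mul, hgauss,
    ← Complex.ofReal_div, ← Complex.ofReal_natCast, ← Complex.ofReal_ofNat, ← Complex.ofReal_div,
    ← Complex.ofReal_cpow (by positivity)]
  push_cast
  ring_nf

theorem fourierInv_tsum_gaussian_re_pos {a b : ℕ → ℝ} {β : ℝ} (hβ : 0 < β) (ha : ∀ n, 0 < a n)
    (hb : ∀ n, β ≤ b n) (hsum : Summable a) (x : V) :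
    0 < (𝓕⁻ (fun v : V => ((∑' n, a n * exp (-b n * ‖v‖ ^ 2) : ℝ) : ℂ)) x).re := by
  have hbpos (n : ℕ) : 0 < b n := hβ.trans_le (hb n)
  set d : ℝ := (Module.finrank ℝ V : ℝ)
  have hint (n : ℕ) : Integrable fun v : V => ((a n * exp (-b n * ‖v‖ ^ 2) : ℝ) : ℂ) :=
    ((gaussianSchwartzMap (V := V) (hbpos n)).integrable.const_mul (a n)).ofReal
  have hnorm (n : ℕ) : ∫ v : V, ‖((a n * exp (-b n * ‖v‖ ^ 2) : ℝ) : ℂ)‖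
      = a n * (π / b n) ^ (d / 2) := by
    simp_rw [Complex.norm_real, norm_of_nonneg (mul_pos (ha _) (exp_pos _)).le]
    rw [integral_const_mul, GaussianFourier.integral_rexp_neg_mul_sq_norm (hbpos n)]
  have hsum_norm : Summable fun n => ∫ v : V, ‖((a n * exp (-b n * ‖v‖ ^ 2) : ℝ) : ℂ)‖ := by
    refine (hsum.mul_right ((π / β) ^ (d / 2))).of_nonneg_of_le
      (fun n => integral_nonneg fun v => norm_nonneg _) fun n => ?_
    rw [hnorm]
    have := hbpos n
    exact mul_le_mul_of_nonneg_left (by gcongr; exact hb n) (ha n).le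
  have hterm := Complex.hasSum_re (hasSum_fourierInv hint hsum_norm x)
  simp only [fourierInv_const_mul_gaussian _ (hbpos _), Complex.ofReal_re] at hterm
  simp_rw [Complex.ofReal_tsum]
  rw [← hterm.tsum_eq]
  have hpos (n : ℕ) : 0 < a n * ((π / b n) ^ (d / 2) * exp (-π ^ 2 * ‖x‖ ^ 2 / b n)) := by
    have := ha n
    have := hbpos n
    positivity
  exact hterm.summable.tsum_pos (fun n => (hpos n).le) 0 (hpos 0)

end Fourier

/-- For the standard Bose gas (`E(p)=|p|²`), the kernel
`R̂(p) = 2 ∑_{n≥1} zⁿ e^{-βn|p|²}` is a Schwartz function and its inverse Fourier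
transform is strictly positive everywhere. -/
theorem stmt1 (d : ℕ) (β z : ℝ) (hβ : 0 < β) (hz0 : 0 < z) (hz1 : z < 1) :
    ∃ R : SchwartzMap (EuclideanSpace ℝ (Fin d)) ℝ,
      (∀ p, R p = 2 * ∑' n : ℕ, z ^ (n + 1) * Real.exp (-β * ((n : ℝ) + 1) * ‖p‖ ^ 2)) ∧
      ∀ x, 0 < (FourierTransformInv.fourierInv (fun p => ((R p : ℝ) : ℂ)) x).re := by
  obtain ⟨R, hR⟩ := exists_schwartzMap_eq_two_mul_tsum (V := EuclideanSpace ℝ (Fin d)) hβ hz0 hz1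
  refine ⟨R, hR, fun x => ?_⟩
  have hR' (p : EuclideanSpace ℝ (Fin d)) :
      R p = ∑' n : ℕ, 2 * z ^ (n + 1) * exp (-(β * ((n : ℝ) + 1)) * ‖p‖ ^ 2) := by
    rw [hR, ← tsum_mul_left]
    congr! 2 with n
    ring_nf
  simp_rw [hR']
  exact fourierInv_tsum_gaussian_re_pos hβ (fun n => by positivity)
    (fun n => le_mul_of_one_le_right hβ.le (by linarith [n.cast_nonneg (α := ℝ)]))
    (((summable_nat_add_iff 1).2 (summable_geometric_of_lt_one hz0.le hz1)).mul_left 2) x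
end

section
/- Let β > 0, λ > 0, and define f(s) = (e^{-sλ} + e^{-(β-s)λ})/(1 - e^{-βλ}) for s ∈ [0,β], extended β-periodically and symmetrically to ℝ. Then for any finite collections s_1,…,s_n ∈ ℝ and c_1,…,c_n ∈ ℂ, the matrix (f(|s_i - s_j|))_{i,j} is positive semi-definite, i.e., ∑_{i,j} c̄_i c_j f(|s_i - s_j|) ≥ 0. -/
/-!
Let `g` be the `β`-periodic extension of `u ↦ exp (-λ u)` from `[0, β)`. A direct computation
gives `f (x - y) = C ∫₀^β g (x - t) g (y - t) dt` with `C = 2λ / (1 - e^{-βλ})² > 0`, so `f` is a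
Gram kernel on `L²(0, β)` and `∑ᵢⱼ c̄ᵢ cⱼ f (sᵢ - sⱼ) = C ∫₀^β |∑ᵢ cᵢ g (sᵢ - t)|² dt ≥ 0`.
-/

open Real MeasureTheory Set ComplexConjugate

theorem re_sum_conj_mul_integral_mul_nonneg {α ι : Type*} [MeasurableSpace α] [Fintype ι]
    (μ : Measure α) (Φ : ι → α → ℝ) (hΦ : ∀ i j, Integrable (fun t => Φ i t * Φ j t) μ)
    (c : ι → ℂ) :
    0 ≤ (∑ i, ∑ j, conj (c i) * c j * ((∫ t, Φ i t * Φ j t ∂μ : ℝ) : ℂ)).re := by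
  have hterm : ∀ i j, Integrable (fun t => conj (c i) * c j * ((Φ i t * Φ j t : ℝ) : ℂ)) μ :=
    fun i j => (hΦ i j).ofReal.const_mul _
  have hsquare : ∀ t, ∑ i, ∑ j, conj (c i) * c j * ((Φ i t * Φ j t : ℝ) : ℂ)
      = (Complex.normSq (∑ i, c i * Φ i t) : ℂ) := by
    intro t
    rw [Complex.normSq_eq_conj_mul_self, map_sum, Finset.sum_mul_sum]
    simp only [map_mul, Complex.conj_ofReal, Complex.ofReal_mul]
    exact Fintype.sum_congr _ _ fun i => Fintype.sum_congr _ _ fun j => by ring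
  calc (0 : ℝ) ≤ ∫ t, Complex.normSq (∑ i, c i * Φ i t) ∂μ :=
        integral_nonneg fun t => Complex.normSq_nonneg _
    _ = (∑ i, ∑ j, conj (c i) * c j * ((∫ t, Φ i t * Φ j t ∂μ : ℝ) : ℂ)).re := by
      rw [← Complex.ofReal_re (∫ t, _ ∂μ), ← integral_complex_ofReal]
      simp only [← hsquare]
      rw [integral_finsetSum _ fun i _ => integrable_finsetSum _ fun j _ => hterm i j]
      simp only [integral_finsetSum _ fun j _ => hterm _ j, integral_const_mul,
        integral_complex_ofReal]

noncomputable def periodicExpDecay (β lam u : ℝ) : ℝ :=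
  exp (-(β * Int.fract (u / β)) * lam)

section
variable {β lam : ℝ}

lemma periodicExpDecay_eq_exp_toIcoMod (hβ : 0 < β) (u : ℝ) :
    periodicExpDecay β lam u = exp (-toIcoMod hβ 0 u * lam) := by
  rw [toIcoMod_eq_fract_mul, mul_comm _ β, periodicExpDecay]

lemma periodicExpDecay_periodic (hβ : 0 < β) :
    Function.Periodic (periodicExpDecay β lam) β := fun u => by
  simp only [periodicExpDecay_eq_exp_toIcoMod hβ, toIcoMod_add_right]

lemma periodicExpDecay_of_mem_Ico (hβ : 0 < β) {u : ℝ} (hu : u ∈ Ico 0 β) :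
    periodicExpDecay β lam u = exp (-u * lam) := by
  rw [periodicExpDecay_eq_exp_toIcoMod hβ, (toIcoMod_eq_self hβ).2 (by simpa using hu)]

lemma periodicExpDecay_of_mem_Ico_neg (hβ : 0 < β) {u : ℝ} (hu : u ∈ Ico (-β) 0) :
    periodicExpDecay β lam u = exp (-(u + β) * lam) := by
  rw [← periodicExpDecay_periodic hβ, periodicExpDecay_of_mem_Ico hβ]
  exact ⟨by linarith [hu.1], by linarith [hu.2]⟩

lemma measurable_periodicExpDecay : Measurable (periodicExpDecay β lam) :=
  measurable_exp.comp (((measurable_id.div_const β).fract.const_mul β).neg.mul_const lam)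

lemma periodicExpDecay_pos (u : ℝ) : 0 < periodicExpDecay β lam u := exp_pos _

lemma periodicExpDecay_le_one (hβ : 0 < β) (hlam : 0 ≤ lam) (u : ℝ) :
    periodicExpDecay β lam u ≤ 1 := by
  rw [periodicExpDecay_eq_exp_toIcoMod hβ, exp_le_one_iff, neg_mul, neg_nonpos]
  exact mul_nonneg (toIcoMod_mem_Ico hβ 0 u).1 hlam

lemma integrable_periodicExpDecay_comp_mul {α : Type*} [MeasurableSpace α] {μ : Measure α}
    [IsFiniteMeasure μ] (hβ : 0 < β) (hlam : 0 ≤ lam) {u v : α → ℝ} (hu : Measurable u)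
    (hv : Measurable v) :
    Integrable (fun t => periodicExpDecay β lam (u t) * periodicExpDecay β lam (v t)) μ := by
  refine .of_bound ((measurable_periodicExpDecay.comp hu).mul
    (measurable_periodicExpDecay.comp hv)).aestronglyMeasurable 1 (ae_of_all _ fun t => ?_)
  rw [Real.norm_of_nonneg (mul_pos (periodicExpDecay_pos _) (periodicExpDecay_pos _)).le]
  exact mul_le_one₀ (periodicExpDecay_le_one hβ hlam _) (periodicExpDecay_pos _).le
    (periodicExpDecay_le_one hβ hlam _)

lemma integral_exp_mul_add {c : ℝ} (hc : c ≠ 0) (e a b : ℝ) :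
    ∫ t in a..b, exp (c * t + e) = (exp (c * b + e) - exp (c * a + e)) / c := by
  rw [intervalIntegral.integral_comp_mul_add (fun t => exp t) hc, integral_exp, smul_eq_mul,
    inv_mul_eq_div]

lemma integral_periodicExpDecay_sub_mul_of_mem_Ico (hβ : 0 < β) (hlam : 0 < lam) {d : ℝ}
    (hd : d ∈ Ico 0 β) :
    ∫ t in 0..β, periodicExpDecay β lam (d - t) * periodicExpDecay β lam (-t)
      = (1 - exp (-β * lam)) * (exp (-d * lam) + exp (-(β - d) * lam)) / (2 * lam) := by
  obtain ⟨hd0, hdβ⟩ := hd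
  -- `-t` stays in `[-β, 0)`, while `d - t` leaves `[0, β)` for `[-β, 0)` as `t` crosses `d`.
  have h2lam : 2 * lam ≠ 0 := by positivity
  have hleft : ∫ t in 0..d, periodicExpDecay β lam (d - t) * periodicExpDecay β lam (-t)
      = ∫ t in 0..d, exp (2 * lam * t + -((d + β) * lam)) := by
    refine intervalIntegral.integral_congr_ae (ae_of_all _ fun t ht => ?_)
    rw [uIoc_of_le hd0] at ht
    rw [periodicExpDecay_of_mem_Ico hβ ⟨by linarith [ht.2], by linarith [ht.1]⟩,
      periodicExpDecay_of_mem_Ico_neg hβ ⟨by linarith [ht.2], by linarith [ht.1]⟩, ← exp_add]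
    ring_nf
  have hright : ∫ t in d..β, periodicExpDecay β lam (d - t) * periodicExpDecay β lam (-t)
      = ∫ t in d..β, exp (2 * lam * t + -((d + 2 * β) * lam)) := by
    refine intervalIntegral.integral_congr_ae (ae_of_all _ fun t ht => ?_)
    rw [uIoc_of_le hdβ.le] at ht
    rw [periodicExpDecay_of_mem_Ico_neg hβ ⟨by linarith [ht.2], by linarith [ht.1]⟩,
      periodicExpDecay_of_mem_Ico_neg hβ ⟨by linarith [ht.2], by linarith [ht.1]⟩, ← exp_add]
    ring_nf
  have hint (a b : ℝ) : IntervalIntegrable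
      (fun t => periodicExpDecay β lam (d - t) * periodicExpDecay β lam (-t)) volume a b :=
    ⟨integrable_periodicExpDecay_comp_mul hβ hlam.le (measurable_const.sub measurable_id)
      measurable_neg,
    integrable_periodicExpDecay_comp_mul hβ hlam.le (measurable_const.sub measurable_id)
      measurable_neg⟩
  rw [← intervalIntegral.integral_add_adjacent_intervals (hint 0 d) (hint d β), hleft, hright,
    integral_exp_mul_add h2lam, integral_exp_mul_add h2lam]
  field_simp
  ring_nf
  simp only [← exp_add]
  ring_nf

lemma periodicExpDecay_sub_toIcoMod (hβ : 0 < β) (d t : ℝ) :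
    periodicExpDecay β lam (toIcoMod hβ 0 d - t) = periodicExpDecay β lam (d - t) := by
  rw [toIcoMod, sub_right_comm, (periodicExpDecay_periodic hβ).sub_zsmul_eq]

lemma integral_periodicExpDecay_sub_mul_sub (hβ : 0 < β) (hlam : 0 < lam) (x y : ℝ) :
    ∫ t in 0..β, periodicExpDecay β lam (x - t) * periodicExpDecay β lam (y - t)
      = (1 - exp (-β * lam)) * (exp (-toIcoMod hβ 0 (x - y) * lam)
          + exp (-(β - toIcoMod hβ 0 (x - y)) * lam)) / (2 * lam) := by
  have hper : Function.Periodic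
      (fun t => periodicExpDecay β lam (x - t) * periodicExpDecay β lam (y - t)) β := fun t => by
    simp only [← sub_sub, (periodicExpDecay_periodic hβ).sub_eq]
  rw [← integral_periodicExpDecay_sub_mul_of_mem_Ico hβ hlam (toIcoMod_mem_Ico' hβ (x - y))]
  calc ∫ t in 0..β, periodicExpDecay β lam (x - t) * periodicExpDecay β lam (y - t)
      = ∫ t in y..y + β, periodicExpDecay β lam (x - t) * periodicExpDecay β lam (y - t) := by
        simpa using hper.intervalIntegral_add_eq 0 y
    _ = ∫ t in 0..β,
          periodicExpDecay β lam (x - (t + y)) * periodicExpDecay β lam (y - (t + y)) := by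
        rw [intervalIntegral.integral_comp_add_right (fun t =>
          periodicExpDecay β lam (x - t) * periodicExpDecay β lam (y - t)), zero_add, add_comm]
    _ = _ := by
        congr 1 with t
        rw [periodicExpDecay_sub_toIcoMod]
        ring_nf

noncomputable def thermalTwoPoint (β lam s : ℝ) : ℝ :=
  (exp (-(β * Int.fract (s / β)) * lam) + exp (-(β - β * Int.fract (s / β)) * lam)) /
    (1 - exp (-β * lam))

lemma thermalTwoPoint_abs_sub_eq_integral (hβ : 0 < β) (hlam : 0 < lam) (x y : ℝ) :
    thermalTwoPoint β lam |x - y| = 2 * lam / (1 - exp (-β * lam)) ^ 2 *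
      ∫ t in Ioc 0 β, periodicExpDecay β lam (x - t) * periodicExpDecay β lam (y - t) := by
  wlog hxy : y ≤ x generalizing x y
  · rw [abs_sub_comm, this y x (le_of_not_ge hxy)]
    simp only [mul_comm (periodicExpDecay β lam (y - _))]
  have hq : 0 < 1 - exp (-β * lam) := sub_pos.2 (exp_lt_one_iff.2 (by nlinarith))
  rw [abs_of_nonneg (sub_nonneg.2 hxy), ← intervalIntegral.integral_of_le hβ.le,
    integral_periodicExpDecay_sub_mul_sub hβ hlam, thermalTwoPoint, mul_comm β,
    ← toIcoMod_eq_fract_mul hβ]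
  field_simp

end

/-- stochastic positivity of the one-mode thermal two-point function:
the matrix `(f(|sᵢ-sⱼ|))` is positive semi-definite, where `f` is the β-periodic
(even) extension of `s ↦ (e^{-sλ}+e^{-(β-s)λ})/(1-e^{-βλ})` from `[0,β]`. -/
theorem stmt4 (β lam : ℝ) (hβ : 0 < β) (hlam : 0 < lam) :
    let f : ℝ → ℝ := fun s =>
      (Real.exp (-(β * Int.fract (s / β)) * lam) +
        Real.exp (-(β - β * Int.fract (s / β)) * lam)) / (1 - Real.exp (-β * lam))
    ∀ (n : ℕ) (s : Fin n → ℝ) (c : Fin n → ℂ),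
      0 ≤ (∑ i, ∑ j, (starRingEnd ℂ) (c i) * c j * ((f |s i - s j| : ℝ) : ℂ)).re := by
  intro f n s c
  set C := 2 * lam / (1 - exp (-β * lam)) ^ 2
  have hgram := re_sum_conj_mul_integral_mul_nonneg (volume.restrict (Ioc 0 β))
    (fun i t => periodicExpDecay β lam (s i - t))
    (fun i j => integrable_periodicExpDecay_comp_mul hβ hlam.le
      (measurable_const.sub measurable_id) (measurable_const.sub measurable_id)) c
  have hsum : ∑ i, ∑ j, conj (c i) * c j * ((f |s i - s j| : ℝ) : ℂ) = (C : ℂ) *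
      ∑ i, ∑ j, conj (c i) * c j * ((∫ t in Ioc 0 β,
        periodicExpDecay β lam (s i - t) * periodicExpDecay β lam (s j - t) : ℝ) : ℂ) := by
    simp only [Finset.mul_sum]
    refine Fintype.sum_congr _ _ fun i => Fintype.sum_congr _ _ fun j => ?_
    rw [show f |s i - s j| = thermalTwoPoint β lam |s i - s j| from rfl,
      thermalTwoPoint_abs_sub_eq_integral hβ hlam, Complex.ofReal_mul]
    ring
  rw [hsum, Complex.re_ofReal_mul]
  exact mul_nonneg (by positivity) hgram
end

section
/- Let β > 0, λ > 0, and f(s) = (e^{-sλ} + e^{-(β-s)λ})/(1 - e^{-βλ}). Then for any t_1,…,t_n ∈ [0, β/2] and c_1,…,c_n ∈ ℂ, one has ∑_{i,j} c̄_i c_j f(t_i + t_j) ≥ 0 (OS-positivity on the circle of circumference β). -/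
open Real

/-- OS-positivity on the circle of circumference β of the one-mode thermal
covariance: for `tᵢ ∈ [0,β/2]`, `∑ c̄ᵢcⱼ f(tᵢ+tⱼ) ≥ 0`. -/
theorem stmt5 (β lam : ℝ) (hβ : 0 < β) (hlam : 0 < lam) :
    let f : ℝ → ℝ := fun s =>
      (Real.exp (-s * lam) + Real.exp (-(β - s) * lam)) / (1 - Real.exp (-β * lam))
    ∀ (n : ℕ) (t : Fin n → ℝ) (c : Fin n → ℂ),
      (∀ i, t i ∈ Set.Icc 0 (β / 2)) →
      0 ≤ (∑ i, ∑ j, (starRingEnd ℂ) (c i) * c j * ((f (t i + t j) : ℝ) : ℂ)).re := by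
  intro f n t c _
  set D : ℝ := (1 - Real.exp (-β * lam))⁻¹ with hD
  have hDpos : 0 < D := by
    apply inv_pos.mpr
    have : Real.exp (-β * lam) < 1 := by
      rw [Real.exp_lt_one_iff]
      nlinarith
    linarith
  set a : Fin n → ℝ := fun i => Real.exp (-(t i) * lam) with ha
  set b : Fin n → ℝ := fun i => Real.exp (-(β / 2 - t i) * lam) with hb
  have hf : ∀ i j, f (t i + t j) = D * (a i * a j + b i * b j) := by
    intro i j
    simp only [f, ha, hb, hD, ← Real.exp_add]
    rw [div_eq_inv_mul]
    ring_nf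
  set A : ℂ := ∑ i, c i * (a i : ℂ) with hA
  set B : ℂ := ∑ i, c i * (b i : ℂ) with hB
  have key : (∑ i, ∑ j, (starRingEnd ℂ) (c i) * c j * ((f (t i + t j) : ℝ) : ℂ))
      = (D : ℂ) * ((starRingEnd ℂ) A * A + (starRingEnd ℂ) B * B) := by
    have hconjA : (starRingEnd ℂ) A = ∑ i, (starRingEnd ℂ) (c i) * (a i : ℂ) := by
      rw [hA, map_sum]
      congr 1; ext i
      simp [Complex.conj_ofReal]
    have hconjB : (starRingEnd ℂ) B = ∑ i, (starRingEnd ℂ) (c i) * (b i : ℂ) := by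
      rw [hB, map_sum]
      congr 1; ext i
      simp [Complex.conj_ofReal]
    rw [hconjA, hconjB, hA, hB, Finset.sum_mul_sum, Finset.sum_mul_sum,
      ← Finset.sum_add_distrib, Finset.mul_sum]
    congr 1; ext i
    rw [← Finset.sum_add_distrib, Finset.mul_sum]
    congr 1; ext j
    rw [hf i j]
    push_cast
    ring
  rw [key]
  have h1 : (starRingEnd ℂ) A * A = (Complex.normSq A : ℂ) := by
    rw [mul_comm, Complex.mul_conj]
  have h2 : (starRingEnd ℂ) B * B = (Complex.normSq B : ℂ) := by
    rw [mul_comm, Complex.mul_conj]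
  rw [h1, h2]
  rw [← Complex.ofReal_add, ← Complex.ofReal_mul, Complex.ofReal_re]
  have := Complex.normSq_nonneg A
  have := Complex.normSq_nonneg B
  nlinarith
end

section
/- Let L be a positive self-adjoint operator on a Hilbert space H with purely discrete spectrum, eigenvalues 0 < λ_1 ≤ λ_2 ≤ ⋯ and an orthonormal basis of eigenvectors u_k fixed by a conjugation C (i.e., C u_k = u_k). Then the real-linear span of { e^{itL} f : t ∈ ℝ, f ∈ H with C f = f } is dense in H. -/
/-- abstract Lemma 2.13: for a positive self-adjoint operator with purely
discrete spectrum, given through its orthonormal eigenbasis `u` (fixed by a conjugation `C`),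
eigenvalues `λ_k > 0` and unitary group `U t = e^{itL}`, the real-linear span of
`{e^{itL} f : t ∈ ℝ, C f = f}` is dense. -/
theorem stmt9 {H : Type*} [NormedAddCommGroup H] [InnerProductSpace ℂ H] [CompleteSpace H]
    (u : ℕ → H) (hu : Orthonormal ℂ u)
    (hcomplete : Dense (Submodule.span ℂ (Set.range u) : Set H))
    (lam : ℕ → ℝ) (hlam : ∀ k, 0 < lam k) (hmono : Monotone lam)
    (C : H → H) (hCadd : ∀ x y, C (x + y) = C x + C y)
    (hCsmul : ∀ (a : ℂ) (x : H), C (a • x) = (starRingEnd ℂ) a • C x)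
    (hCiso : ∀ x, ‖C x‖ = ‖x‖) (hCinv : ∀ x, C (C x) = x)
    (hCu : ∀ k, C (u k) = u k)
    (U : ℝ → H →L[ℂ] H)
    (hU : ∀ (t : ℝ) (k : ℕ), U t (u k) = Complex.exp (Complex.I * (t : ℂ) * (lam k : ℂ)) • u k)
    (hUiso : ∀ (t : ℝ) (x : H), ‖U t x‖ = ‖x‖) :
    Dense (Submodule.span ℝ {x : H | ∃ (t : ℝ) (f : H), C f = f ∧ x = U t f} : Set H) := by
  set S : Set H := {x : H | ∃ (t : ℝ) (f : H), C f = f ∧ x = U t f} with hS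
  set T : Submodule ℝ H := Submodule.span ℝ S with hT
  have huS : ∀ k, u k ∈ S := fun k => ⟨0, u k, hCu k, by rw [hU]; simp⟩
  have hiuS : ∀ k, Complex.I • u k ∈ S := by
    intro k
    refine ⟨Real.pi / (2 * lam k), u k, hCu k, ?_⟩
    rw [hU]
    have h0 : (lam k : ℂ) ≠ 0 := by exact_mod_cast (hlam k).ne'
    have harg : Complex.I * ((Real.pi / (2 * lam k) : ℝ) : ℂ) * (lam k : ℂ)
        = ((Real.pi / 2 : ℝ) : ℂ) * Complex.I := by
      push_cast
      field_simp
    rw [harg, Complex.exp_mul_I]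
    rw [← Complex.ofReal_cos, ← Complex.ofReal_sin, Real.cos_pi_div_two, Real.sin_pi_div_two]
    simp
  have hreT : ∀ (r : ℝ) (y : H), y ∈ T → (r : ℂ) • y ∈ T := by
    intro r y hy
    rw [Complex.coe_smul]
    exact T.smul_mem r hy
  let p : Submodule ℂ H :=
    { carrier := {x | x ∈ T ∧ Complex.I • x ∈ T}
      zero_mem' := by simp
      add_mem' := fun hx hy =>
        ⟨T.add_mem hx.1 hy.1, by rw [smul_add]; exact T.add_mem hx.2 hy.2⟩
      smul_mem' := by
        intro a x hx
        have hdecomp : ∀ y : H, y ∈ T → Complex.I • y ∈ T → a • y ∈ T := by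
          intro y hy hIy
          have : a • y = (a.re : ℂ) • y + (a.im : ℂ) • (Complex.I • y) := by
            rw [smul_smul, ← add_smul]
            congr 1
            simp [Complex.re_add_im]
          rw [this]
          exact T.add_mem (hreT _ _ hy) (hreT _ _ hIy)
        constructor
        · exact hdecomp x hx.1 hx.2
        · have : Complex.I • a • x = a • (Complex.I • x) := smul_comm _ _ _
          rw [this]
          refine hdecomp _ hx.2 ?_
          have : Complex.I • Complex.I • x = -x := by
            rw [smul_smul, Complex.I_mul_I, neg_one_smul]
          rw [this]
          exact T.neg_mem hx.1 }
  have hle : Submodule.span ℂ (Set.range u) ≤ p := by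
    rw [Submodule.span_le]
    rintro _ ⟨k, rfl⟩
    exact ⟨Submodule.subset_span (huS k), Submodule.subset_span (hiuS k)⟩
  have hsubset : (Submodule.span ℂ (Set.range u) : Set H) ⊆ (T : Set H) :=
    fun x hx => (hle hx).1
  exact hcomplete.mono hsubset
end

section
/- Let d ≥ 2 and let Λ ⊂ ℝ^d be a bounded open connected domain with smooth boundary, b ∈ C¹(∂Λ), b ≥ 0, and let L^b be the Friedrichs extension of −Δ with Robin boundary condition ∂^n f = b f. Assume L^b has purely discrete spectrum 0 < λ_1 ≤ λ_2 ≤ ⋯ with real-valued eigenfunctions {u_k} forming a complete orthonormal set in L²(Λ). Then the ℝ-linear span of { e^{itL^b} f : t ∈ ℝ, f ∈ L²(Λ) real-valued } is dense in L²(Λ). -/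
open MeasureTheory

/-- Lemma 2.13: for the Robin Laplacian `L^b` on a bounded smooth domain
`Λ ⊂ ℝ^d` (`d ≥ 2`), given through its complete orthonormal system of real-valued
eigenfunctions `u_k` with eigenvalues `λ_k > 0` and unitary group `U t = e^{itL^b}`,
the ℝ-linear span of `{e^{itL^b} f : t ∈ ℝ, f real-valued}` is dense in `L²(Λ)`. -/
theorem stmt12 (d : ℕ) (hd : 2 ≤ d) (Λ : Set (EuclideanSpace ℝ (Fin d)))
    (hopen : IsOpen Λ) (hbdd : Bornology.IsBounded Λ) (hconn : IsConnected Λ)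
    (b : EuclideanSpace ℝ (Fin d) → ℝ) (hb : ContinuousOn b (frontier Λ))
    (hbpos : ∀ x ∈ frontier Λ, 0 ≤ b x)
    (lam : ℕ → ℝ) (hlam : ∀ k, 0 < lam k) (hmono : Monotone lam)
    (u : ℕ → Lp ℂ 2 ((volume : Measure (EuclideanSpace ℝ (Fin d))).restrict Λ))
    (hu : Orthonormal ℂ u)
    (hreal : ∀ k, ∀ᵐ x ∂((volume : Measure (EuclideanSpace ℝ (Fin d))).restrict Λ),
      ((u k : EuclideanSpace ℝ (Fin d) → ℂ) x).im = 0)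
    (hcomplete : Dense (Submodule.span ℂ (Set.range u) :
      Set (Lp ℂ 2 ((volume : Measure (EuclideanSpace ℝ (Fin d))).restrict Λ))))
    (U : ℝ → Lp ℂ 2 ((volume : Measure (EuclideanSpace ℝ (Fin d))).restrict Λ) →L[ℂ]
      Lp ℂ 2 ((volume : Measure (EuclideanSpace ℝ (Fin d))).restrict Λ))
    (hU : ∀ (t : ℝ) (k : ℕ), U t (u k) = Complex.exp (Complex.I * (t : ℂ) * (lam k : ℂ)) • u k)
    (hUiso : ∀ t f, ‖U t f‖ = ‖f‖) :
    Dense (Submodule.span ℝ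
      {g | ∃ (t : ℝ) (f : Lp ℂ 2 ((volume : Measure (EuclideanSpace ℝ (Fin d))).restrict Λ)),
        (∀ᵐ x ∂((volume : Measure (EuclideanSpace ℝ (Fin d))).restrict Λ),
          ((f : EuclideanSpace ℝ (Fin d) → ℂ) x).im = 0) ∧ g = U t f} :
      Set (Lp ℂ 2 ((volume : Measure (EuclideanSpace ℝ (Fin d))).restrict Λ))) := by
  set S := {g : Lp ℂ 2 ((volume : Measure (EuclideanSpace ℝ (Fin d))).restrict Λ) |
      ∃ (t : ℝ) (f : Lp ℂ 2 ((volume : Measure (EuclideanSpace ℝ (Fin d))).restrict Λ)),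
        (∀ᵐ x ∂((volume : Measure (EuclideanSpace ℝ (Fin d))).restrict Λ),
          ((f : EuclideanSpace ℝ (Fin d) → ℂ) x).im = 0) ∧ g = U t f} with hS
  have huS : ∀ k, u k ∈ S := by
    intro k
    exact ⟨0, u k, hreal k, by rw [hU]; simp⟩
  have hiuS : ∀ k, (Complex.I • u k) ∈ S := by
    intro k
    refine ⟨Real.pi / (2 * lam k), u k, hreal k, ?_⟩
    rw [hU]
    congr 1
    have hlk : ((lam k : ℝ) : ℂ) ≠ 0 := by exact_mod_cast (hlam k).ne'
    have h2 : Complex.I * ((Real.pi / (2 * lam k) : ℝ) : ℂ) * (lam k : ℂ)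
        = ((Real.pi / 2 : ℝ) : ℂ) * Complex.I := by
      push_cast
      field_simp [hlk]
    rw [h2, Complex.exp_mul_I, ← Complex.ofReal_cos, ← Complex.ofReal_sin,
      Real.cos_pi_div_two, Real.sin_pi_div_two]
    simp
  have key : ∀ x ∈ Submodule.span ℂ (Set.range u),
      x ∈ Submodule.span ℝ S ∧ Complex.I • x ∈ Submodule.span ℝ S := by
    intro x hx
    induction hx using Submodule.span_induction with
    | mem x hx =>
      obtain ⟨k, rfl⟩ := hx
      exact ⟨Submodule.subset_span (huS k), Submodule.subset_span (hiuS k)⟩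
    | zero => simp [Submodule.zero_mem]
    | add x y _ _ hx hy =>
      exact ⟨Submodule.add_mem _ hx.1 hy.1, by
        rw [smul_add]; exact Submodule.add_mem _ hx.2 hy.2⟩
    | smul c x _ hx =>
      have hdec : ∀ z : Lp ℂ 2 ((volume : Measure (EuclideanSpace ℝ (Fin d))).restrict Λ),
          z ∈ Submodule.span ℝ S → Complex.I • z ∈ Submodule.span ℝ S →
          c • z ∈ Submodule.span ℝ S := by
        intro z hz hiz
        have : c • z = c.re • z + c.im • (Complex.I • z) := by
          rw [← algebraMap_smul ℂ c.re z, ← algebraMap_smul ℂ c.im (Complex.I • z),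
            smul_smul]
          simp only [Complex.coe_algebraMap]
          rw [← add_smul]
          congr 1
          simp [Complex.re_add_im c]
        rw [this]
        exact Submodule.add_mem _ (Submodule.smul_mem _ _ hz) (Submodule.smul_mem _ _ hiz)
      refine ⟨hdec x hx.1 hx.2, ?_⟩
      have hix : Complex.I • (c • x) = c • (Complex.I • x) := smul_comm _ _ _
      rw [hix]
      refine hdec _ hx.2 ?_
      rw [smul_smul, Complex.I_mul_I, neg_one_smul]
      exact Submodule.neg_mem _ hx.1
  exact Dense.mono (fun x hx => (key x hx).1) hcomplete
end

section
/- Let S: [0,β] × ℝ^d → ℝ be a symmetric positive-definite kernel (in the sense that the associated Gaussian process exists), let dρ be a complex bounded measure on ℝ of compact support with conj(dρ(α)) = dρ(−α), V ∈ L¹(ℝ^d), λ ∈ ℂ, and Λ ⊂ ℝ^d bounded measurable. Define the n-th moment integral M_n = λⁿ ∫_{[0,β]ⁿ} dτ ∫ dρ(α)₁…dρ(α)ₙ ∫ dρ(α')₁…dρ(α')ₙ ∫_{Λⁿ} dx ∫_{Λⁿ} dy ∏ᵢ V(xᵢ−yᵢ)·exp(−½ ∑_{i≠j} αᵢαⱼ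 S(τᵢ−τⱼ, xᵢ−xⱼ)) ·exp(−½ ∑_{i≠j} α'ᵢα'ⱼ S(τᵢ−τⱼ, yᵢ−yⱼ))·exp(−½ ∑_{i,j} αᵢα'ⱼ S(τᵢ−τⱼ, xᵢ−yⱼ)). Then |M_n| ≤ |λ|ⁿ·βⁿ·(Var ρ)^{2n}·exp(2n·a²·S(0,0))·‖V‖₁ⁿ·|Λ|ⁿ, where a = sup{|α| : α ∈ supp ρ} and Var ρ is the total variation of ρ. Consequently ∑_n M_n/n! converges absolutely and satisfies the thermodynamic stability bound |∑_n M_n/n!| ≤ exp(C·|Λ|) with C = |λ|·β·(Var ρ)²·exp(2a²S(0,0))·‖V‖₁. -/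
/-!
Write `Q(c, ξ) = ∑ᵢⱼ cᵢ cⱼ S(τᵢ - τⱼ, ξᵢ - ξⱼ) ≥ 0` and `X` for the cross term
`∑ᵢⱼ αᵢ α'ⱼ S(τᵢ - τⱼ, xᵢ - yⱼ)`. Adding back the diagonal terms `cᵢ² S(0,0) ≤ a² S(0,0)` turns
the exponent of the moment integrand into `-½ (Q(α, x) + Q(α', y) + X)`. Positivity of `Q` on the
concatenated configuration `((α, α'), (x, y))`, with the symmetry of `S` identifying the two cross
terms, gives `Q(α, x) + Q(α', y) + 2X ≥ 0`; hence that quantity is nonpositive and the integrand is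
at most `exp(n a² S(0,0)) ∏ᵢ |V(xᵢ - yᵢ)|`. Integrating out `y` costs `‖V‖₁ⁿ` by translation
invariance, and each remaining integral its total mass. The resulting geometric bound
`‖M_n‖ ≤ (C |Λ|)ⁿ` is then summed against the exponential series.
-/

open MeasureTheory Real

theorem Finset.sum_sum_ite_ne {ι M : Type*} [Fintype ι] [DecidableEq ι] [AddCommGroup M]
    (f : ι → ι → M) :
    ∑ i, ∑ j, (if i ≠ j then f i j else 0) = ∑ i, ∑ j, f i j - ∑ i, f i i := by
  rw [← Finset.sum_sub_distrib]
  refine Finset.sum_congr rfl fun i _ => ?_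
  simp [Finset.sum_ite, Finset.filter_ne]

theorem sum_mul_self_le_of_abs_le {ι : Type*} [Fintype ι] {c : ι → ℝ} {a : ℝ}
    (hc : ∀ i, |c i| ≤ a) : ∑ i, c i * c i ≤ Fintype.card ι * a ^ 2 := by
  calc ∑ i, c i * c i ≤ ∑ _i : ι, a ^ 2 :=
        Finset.sum_le_sum fun i _ => by
          rw [← sq, ← sq_abs]; exact pow_le_pow_left₀ (abs_nonneg _) (hc i) 2
    _ = Fintype.card ι * a ^ 2 := by simp

section Kernel

variable {T E : Type*} [AddGroup T] [AddGroup E] {S : T → E → ℝ}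

def kernelForm (S : T → E → ℝ) {n : ℕ} (τ : Fin n → T) (ξ η : Fin n → E) (c c' : Fin n → ℝ) :
    ℝ :=
  ∑ i, ∑ j, c i * c' j * S (τ i - τ j) (ξ i - η j)

def IsPosSemidefKernel (S : T → E → ℝ) : Prop :=
  ∀ (n : ℕ) (τ : Fin n → T) (ξ : Fin n → E) (c : Fin n → ℝ), 0 ≤ kernelForm S τ ξ ξ c c

noncomputable def momentExponent (S : T → E → ℝ) {n : ℕ} (τ : Fin n → T) (α α' : Fin n → ℝ)
    (x y : Fin n → E) : ℝ :=
  (-(1/2) * ∑ i, ∑ j, if i ≠ j then α i * α j * S (τ i - τ j) (x i - x j) else 0)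
    + (-(1/2) * ∑ i, ∑ j, if i ≠ j then α' i * α' j * S (τ i - τ j) (y i - y j) else 0)
    + (-(1/2) * ∑ i, ∑ j, α i * α' j * S (τ i - τ j) (x i - y j))

theorem kernelForm_swap (hsymm : ∀ t x, S (-t) (-x) = S t x) {n : ℕ}
    (τ : Fin n → T) (ξ η : Fin n → E) (c c' : Fin n → ℝ) :
    kernelForm S τ η ξ c' c = kernelForm S τ ξ η c c' := by
  rw [kernelForm, Finset.sum_comm]
  refine Finset.sum_congr rfl fun i _ => Finset.sum_congr rfl fun j _ => ?_
  rw [← hsymm, neg_sub, neg_sub, mul_comm (c' j)]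

namespace IsPosSemidefKernel

theorem apply_zero_zero_nonneg (hS : IsPosSemidefKernel S) : 0 ≤ S 0 0 := by
  simpa [kernelForm] using hS 1 0 0 1

theorem add_two_mul_kernelForm_nonneg (hS : IsPosSemidefKernel S)
    (hsymm : ∀ t x, S (-t) (-x) = S t x) {n : ℕ} (τ : Fin n → T) (ξ η : Fin n → E)
    (c c' : Fin n → ℝ) :
    0 ≤ kernelForm S τ ξ ξ c c + kernelForm S τ η η c' c' + 2 * kernelForm S τ ξ η c c' := by
  have h := hS (n + n) (Fin.append τ τ) (Fin.append ξ η) (Fin.append c c')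
  have hswap := kernelForm_swap hsymm τ ξ η c c'
  simp only [kernelForm, Fin.sum_univ_add, Fin.append_left, Fin.append_right,
    Finset.sum_add_distrib] at h hswap ⊢
  linarith

theorem momentExponent_le (hS : IsPosSemidefKernel S) (hsymm : ∀ t x, S (-t) (-x) = S t x)
    {n : ℕ} (τ : Fin n → T) (x y : Fin n → E) {α α' : Fin n → ℝ} {a : ℝ}
    (hα : ∀ i, |α i| ≤ a) (hα' : ∀ i, |α' i| ≤ a) :
    momentExponent S τ α α' x y ≤ n * a ^ 2 * S 0 0 := by
  have hcross := hS.add_two_mul_kernelForm_nonneg hsymm τ x y α α'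
  have hx := hS n τ x α
  have hy := hS n τ y α'
  have hS₀ := hS.apply_zero_zero_nonneg
  have hdiag := mul_le_mul_of_nonneg_right (sum_mul_self_le_of_abs_le hα) hS₀
  have hdiag' := mul_le_mul_of_nonneg_right (sum_mul_self_le_of_abs_le hα') hS₀
  simp only [kernelForm, Fintype.card_fin] at hcross hx hy hdiag hdiag'
  simp only [momentExponent, Finset.sum_sum_ite_ne, sub_self, ← Finset.sum_mul]
  linarith

end IsPosSemidefKernel

noncomputable def momentIntegrand (S : T → E → ℝ) (w : ℝ → ℂ) (V : E → ℝ) {n : ℕ}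
    (τ : Fin n → T) (α α' : Fin n → ℝ) (x y : Fin n → E) : ℂ :=
  (∏ i, w (α i)) * (∏ i, w (α' i)) * (∏ i, ((V (x i - y i) : ℝ) : ℂ)) *
    Complex.exp (momentExponent S τ α α' x y : ℂ)

theorem norm_momentIntegrand_le (hS : IsPosSemidefKernel S) (hsymm : ∀ t x, S (-t) (-x) = S t x)
    {w : ℝ → ℂ} (hw : ∀ t, ‖w t‖ = 1) (V : E → ℝ) {n : ℕ} (τ : Fin n → T) (x y : Fin n → E)
    {α α' : Fin n → ℝ} {a : ℝ} (hα : ∀ i, |α i| ≤ a) (hα' : ∀ i, |α' i| ≤ a) :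
    ‖momentIntegrand S w V τ α α' x y‖ ≤ exp (n * a ^ 2 * S 0 0) * ∏ i, |V (x i - y i)| := by
  rw [momentIntegrand, norm_mul, norm_mul, norm_mul, norm_prod, norm_prod, norm_prod,
    Complex.norm_exp_ofReal]
  simp only [hw, Finset.prod_const_one, one_mul, Complex.norm_real, Real.norm_eq_abs]
  rw [mul_comm]
  gcongr
  exact hS.momentExponent_le hsymm τ x y hα hα'

end Kernel

section Integrals

variable {E : Type*} [MeasureSpace E] [AddGroup E] [MeasurableAdd E] [MeasurableNeg E]
  [SigmaFinite (volume : Measure E)] [(volume : Measure E).IsAddLeftInvariant]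
  [(volume : Measure E).IsNegInvariant] {V : E → ℝ}

theorem integrable_prod_abs_sub (hV : Integrable V) {n : ℕ} (x : Fin n → E) :
    Integrable fun y : Fin n → E => ∏ i, |V (x i - y i)| :=
  Integrable.fintype_prod fun i => (hV.comp_sub_left (x i)).abs

theorem integral_prod_abs_sub {n : ℕ} (x : Fin n → E) :
    ∫ y : Fin n → E, ∏ i, |V (x i - y i)| = (∫ z, |V z|) ^ n := by
  rw [volume_pi, integral_fintype_prod_eq_prod (fun i z => |V (x i - z)|)]
  simp [integral_sub_left_eq_self (fun z => |V z|)]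

theorem norm_setIntegral_pi_le_of_norm_le_prod_abs_sub {G : Type*} [NormedAddCommGroup G]
    [NormedSpace ℝ G] (hV : Integrable V) {n : ℕ} (x : Fin n → E) (Λ : Set E)
    {F : (Fin n → E) → G} {K : ℝ} (hF : ∀ y, ‖F y‖ ≤ K * ∏ i, |V (x i - y i)|) :
    ‖∫ y in Set.pi Set.univ (fun _ => Λ), F y‖ ≤ K * (∫ z, |V z|) ^ n := by
  have hg := (integrable_prod_abs_sub hV x).const_mul K
  calc ‖∫ y in Set.pi Set.univ (fun _ => Λ), F y‖
        ≤ ∫ y in Set.pi Set.univ (fun _ => Λ), K * ∏ i, |V (x i - y i)| :=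
          norm_integral_le_of_norm_le hg.integrableOn (ae_of_all _ hF)
    _ ≤ ∫ y : Fin n → E, K * ∏ i, |V (x i - y i)| :=
          setIntegral_le_integral hg (ae_of_all _ fun y => (norm_nonneg _).trans (hF y))
    _ = K * (∫ z, |V z|) ^ n := by rw [integral_const_mul, integral_prod_abs_sub]

end Integrals

theorem volume_pi_const {ι α : Type*} [Fintype ι] [MeasureSpace α]
    [SigmaFinite (volume : Measure α)] (s : Set α) :
    volume (Set.pi Set.univ fun _ : ι => s) = volume s ^ Fintype.card ι := by
  simp [volume_pi_pi]

theorem measureReal_pi_univ {ι α : Type*} [Fintype ι] [MeasurableSpace α] (μ : Measure α)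
    [IsFiniteMeasure μ] :
    (Measure.pi fun _ : ι => μ).real Set.univ = μ.real Set.univ ^ Fintype.card ι := by
  simp [measureReal_def, Measure.pi_univ, ENNReal.toReal_pow]

theorem ae_pi_forall_of_ae {ι α : Type*} [Fintype ι] [MeasurableSpace α] {μ : Measure α}
    [SigmaFinite μ] {p : α → Prop} (h : ∀ᵐ t ∂μ, p t) :
    ∀ᵐ x ∂(Measure.pi fun _ : ι => μ), ∀ i, p (x i) :=
  Filter.eventually_all.2 fun i => (Measure.tendsto_eval_ae_ae (i := i)).eventually h

theorem norm_nested_integral_le {E G : Type*} [MeasureSpace E] [SigmaFinite (volume : Measure E)]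
    [NormedAddCommGroup G] [NormedSpace ℝ G] {n : ℕ} {β : ℝ} (hβ : 0 ≤ β) {Λ : Set E}
    (hΛ : volume Λ < ⊤) (ρ : Measure ℝ) [IsFiniteMeasure ρ] {a : ℝ} (hρ : ∀ᵐ t ∂ρ, |t| ≤ a)
    {F : (Fin n → ℝ) → (Fin n → ℝ) → (Fin n → ℝ) → (Fin n → E) → G} {B : ℝ}
    (hF : ∀ τ α α' x, (∀ i, |α i| ≤ a) → (∀ i, |α' i| ≤ a) → ‖F τ α α' x‖ ≤ B) :
    ‖∫ τ in Set.pi Set.univ (fun _ : Fin n => Set.Icc (0:ℝ) β),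
        (∫ α, (∫ α', (∫ x in Set.pi Set.univ (fun _ : Fin n => Λ), F τ α α' x)
          ∂(Measure.pi fun _ : Fin n => ρ)) ∂(Measure.pi fun _ : Fin n => ρ))‖
      ≤ B * (volume Λ).toReal ^ n * (ρ Set.univ).toReal ^ n * (ρ Set.univ).toReal ^ n * β ^ n := by
  have hΛn : volume (Set.pi Set.univ fun _ : Fin n => Λ) < ⊤ := by
    rw [volume_pi_const]; exact ENNReal.pow_lt_top hΛ
  have hbox : volume (Set.pi Set.univ fun _ : Fin n => Set.Icc (0:ℝ) β) < ⊤ := by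
    rw [volume_pi_const]; exact ENNReal.pow_lt_top measure_Icc_lt_top
  have hρn := ae_pi_forall_of_ae (ι := Fin n) hρ
  have hx := fun τ α α' (hα : ∀ i, |α i| ≤ a) (hα' : ∀ i, |α' i| ≤ a) =>
    norm_setIntegral_le_of_norm_le_const hΛn fun x _ => hF τ α α' x hα hα'
  have hα'x := fun τ α (hα : ∀ i, |α i| ≤ a) =>
    norm_integral_le_of_norm_le_const (hρn.mono fun α' hα' => hx τ α α' hα hα')
  have hαα'x := fun τ =>
    norm_integral_le_of_norm_le_const (hρn.mono fun α hα => hα'x τ α hα)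
  have hταα'x := norm_setIntegral_le_of_norm_le_const hbox fun τ _ => hαα'x τ
  rwa [measureReal_pi_univ, measureReal_def, measureReal_def, measureReal_def, volume_pi_const,
    volume_pi_const, Real.volume_Icc, sub_zero, ENNReal.toReal_pow, ENNReal.toReal_pow,
    ENNReal.toReal_ofReal hβ, Fintype.card_fin] at hταα'x

noncomputable def gentleMoment {E : Type*} [MeasureSpace E] [AddGroup E] (β : ℝ)
    (S : ℝ → E → ℝ) (ρ₀ : Measure ℝ) (w : ℝ → ℂ) (V : E → ℝ) (lam : ℂ) (Λ : Set E) (n : ℕ) : ℂ :=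
  lam ^ n *
    ∫ τ in Set.pi Set.univ (fun _ : Fin n => Set.Icc (0:ℝ) β),
      (∫ α, (∫ α',
        (∫ x in Set.pi Set.univ (fun _ : Fin n => Λ),
          (∫ y in Set.pi Set.univ (fun _ : Fin n => Λ), momentIntegrand S w V τ α α' x y))
        ∂(Measure.pi fun _ : Fin n => ρ₀)) ∂(Measure.pi fun _ : Fin n => ρ₀))

theorem norm_gentleMoment_le {E : Type*} [MeasureSpace E] [AddGroup E] [MeasurableAdd E]
    [MeasurableNeg E] [SigmaFinite (volume : Measure E)] [(volume : Measure E).IsAddLeftInvariant]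
    [(volume : Measure E).IsNegInvariant] {β : ℝ} (hβ : 0 ≤ β) {S : ℝ → E → ℝ}
    (hS : IsPosSemidefKernel S) (hsymm : ∀ t x, S (-t) (-x) = S t x) (ρ₀ : Measure ℝ)
    [IsFiniteMeasure ρ₀] {w : ℝ → ℂ} (hw : ∀ t, ‖w t‖ = 1) {a : ℝ} (hρ₀ : ∀ᵐ t ∂ρ₀, |t| ≤ a)
    {V : E → ℝ} (hV : Integrable V) (lam : ℂ) {Λ : Set E} (hΛ : volume Λ < ⊤) (n : ℕ) :
    ‖gentleMoment β S ρ₀ w V lam Λ n‖ ≤ ‖lam‖ ^ n * β ^ n * ((ρ₀ Set.univ).toReal) ^ (2 * n) *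
      exp (2 * n * a ^ 2 * S 0 0) * (∫ x, |V x|) ^ n * ((volume Λ).toReal) ^ n := by
  have hS₀ := hS.apply_zero_zero_nonneg
  rw [gentleMoment, norm_mul, norm_pow]
  refine (mul_le_mul_of_nonneg_left (norm_nested_integral_le hβ hΛ ρ₀ hρ₀
    fun τ α α' x hα hα' => norm_setIntegral_pi_le_of_norm_le_prod_abs_sub hV x Λ
      fun y => norm_momentIntegrand_le hS hsymm hw V τ x y hα hα') (by positivity)).trans ?_
  calc _ ≤ ‖lam‖ ^ n * (exp (2 * n * a ^ 2 * S 0 0) * (∫ x, |V x|) ^ n * (volume Λ).toReal ^ n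
          * (ρ₀ Set.univ).toReal ^ n * (ρ₀ Set.univ).toReal ^ n * β ^ n) := by
        gcongr
        exact le_mul_of_one_le_left n.cast_nonneg one_le_two
    _ = _ := by ring

section ExpSeries

variable {𝕜 : Type*} [RCLike 𝕜] {f : ℕ → 𝕜} {D : ℝ}

theorem summable_norm_div_factorial_of_norm_le_pow (hf : ∀ n, ‖f n‖ ≤ D ^ n) :
    Summable fun n => ‖f n‖ / n.factorial :=
  (Real.summable_pow_div_factorial D).of_nonneg_of_le (fun n => by positivity)
    fun n => div_le_div_of_nonneg_right (hf n) (by positivity)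

theorem norm_tsum_div_factorial_le_exp_of_norm_le_pow (hf : ∀ n, ‖f n‖ ≤ D ^ n) :
    ‖∑' n, f n / n.factorial‖ ≤ exp D := by
  have hnorm : ∀ n : ℕ, ‖f n / n.factorial‖ = ‖f n‖ / n.factorial := fun n => by
    rw [norm_div, RCLike.norm_natCast]
  have hs := summable_norm_div_factorial_of_norm_le_pow hf
  calc ‖∑' n, f n / n.factorial‖ ≤ ∑' n, ‖f n‖ / n.factorial :=
        (norm_tsum_le_tsum_norm (by simpa only [hnorm] using hs)).trans_eq (tsum_congr hnorm)
    _ ≤ ∑' n : ℕ, D ^ n / n.factorial :=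
        hs.tsum_le_tsum (fun n => div_le_div_of_nonneg_right (hf n) (by positivity))
          (Real.summable_pow_div_factorial D)
    _ = exp D := by rw [Real.exp_eq_exp_ℝ, NormedSpace.exp_eq_tsum_div]

end ExpSeries

theorem stmt13_general (d : ℕ) (β : ℝ) (hβ : 0 < β)
    (S : ℝ → EuclideanSpace ℝ (Fin d) → ℝ)
    (hSsym : ∀ t x, S (-t) (-x) = S t x)
    (hSpd : ∀ (n : ℕ) (τ : Fin n → ℝ) (ξ : Fin n → EuclideanSpace ℝ (Fin d)) (c : Fin n → ℝ),
      0 ≤ ∑ i, ∑ j, c i * c j * S (τ i - τ j) (ξ i - ξ j))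
    (ρ₀ : Measure ℝ) [IsFiniteMeasure ρ₀] (w : ℝ → ℂ)
    (hw : ∀ α, ‖w α‖ = 1)
    (a : ℝ) (hsupp : ∀ᵐ α ∂ρ₀, |α| ≤ a)
    (V : EuclideanSpace ℝ (Fin d) → ℝ) (hV : Integrable V)
    (lam : ℂ) (Λ : Set (EuclideanSpace ℝ (Fin d)))
    (hΛbdd : Bornology.IsBounded Λ) :
    let M : ℕ → ℂ := fun n =>
      lam ^ n *
        ∫ τ in Set.pi Set.univ (fun _ : Fin n => Set.Icc (0:ℝ) β),
          (∫ α, (∫ α',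
            (∫ x in Set.pi Set.univ (fun _ : Fin n => Λ),
              (∫ y in Set.pi Set.univ (fun _ : Fin n => Λ),
                (∏ i, w (α i)) * (∏ i, w (α' i)) * (∏ i, ((V (x i - y i) : ℝ) : ℂ)) *
                  Complex.exp
                    (((-(1/2) * ∑ i, ∑ j,
                        if i ≠ j then α i * α j * S (τ i - τ j) (x i - x j) else 0)
                      + (-(1/2) * ∑ i, ∑ j,
                        if i ≠ j then α' i * α' j * S (τ i - τ j) (y i - y j) else 0)
                      + (-(1/2) * ∑ i, ∑ j,
                        α i * α' j * S (τ i - τ j) (x i - y j)) : ℝ) : ℂ)))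
            ∂(Measure.pi fun _ : Fin n => ρ₀)) ∂(Measure.pi fun _ : Fin n => ρ₀))
    (∀ n : ℕ, ‖M n‖ ≤ ‖lam‖ ^ n * β ^ n * ((ρ₀ Set.univ).toReal) ^ (2 * n) *
        Real.exp (2 * n * a ^ 2 * S 0 0) * (∫ x, |V x|) ^ n * ((volume Λ).toReal) ^ n) ∧
    (Summable fun n : ℕ => ‖M n‖ / n.factorial) ∧
    ‖∑' n : ℕ, M n / n.factorial‖ ≤
      Real.exp ((‖lam‖ * β * ((ρ₀ Set.univ).toReal) ^ 2 *
        Real.exp (2 * a ^ 2 * S 0 0) * (∫ x, |V x|)) * (volume Λ).toReal) := by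
  intro M
  -- `M n` unfolds to `gentleMoment β S ρ₀ w V lam Λ n`, and `hSpd` to `IsPosSemidefKernel S`.
  have hM : ∀ n, ‖M n‖ ≤ ‖lam‖ ^ n * β ^ n * ((ρ₀ Set.univ).toReal) ^ (2 * n) *
      Real.exp (2 * n * a ^ 2 * S 0 0) * (∫ x, |V x|) ^ n * ((volume Λ).toReal) ^ n :=
    norm_gentleMoment_le hβ.le hSpd hSsym ρ₀ hw hsupp hV lam hΛbdd.measure_lt_top
  have hMpow : ∀ n, ‖M n‖ ≤ ((‖lam‖ * β * ((ρ₀ Set.univ).toReal) ^ 2 *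
      Real.exp (2 * a ^ 2 * S 0 0) * (∫ x, |V x|)) * (volume Λ).toReal) ^ n := fun n =>
    (hM n).trans_eq <| by
      rw [show 2 * (n : ℝ) * a ^ 2 * S 0 0 = n * (2 * a ^ 2 * S 0 0) by ring, Real.exp_nat_mul,
        pow_mul]
      ring
  exact ⟨hM, summable_norm_div_factorial_of_norm_le_pow hMpow,
    norm_tsum_div_factorial_le_exp_of_norm_le_pow hMpow⟩

/-- Lemma 3.1, nonlocal gentle perturbation: bound on the Gaussian moment
integrals `M_n` of the nonlocal gentle interaction and resulting thermodynamic stability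
bound `|∑ M_n/n!| ≤ exp(C·|Λ|)`.  The complex measure `dρ` is represented as `w·dρ₀` with
`ρ₀` its (finite) total variation measure and `|w| = 1`; `a` bounds the support of `ρ`. -/
theorem stmt13 (d : ℕ) (β : ℝ) (hβ : 0 < β)
    (S : ℝ → EuclideanSpace ℝ (Fin d) → ℝ)
    (hSsym : ∀ t x, S (-t) (-x) = S t x)
    (hSpd : ∀ (n : ℕ) (τ : Fin n → ℝ) (ξ : Fin n → EuclideanSpace ℝ (Fin d)) (c : Fin n → ℝ),
      0 ≤ ∑ i, ∑ j, c i * c j * S (τ i - τ j) (ξ i - ξ j))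
    (ρ₀ : Measure ℝ) [IsFiniteMeasure ρ₀] (w : ℝ → ℂ)
    (hw : ∀ α, ‖w α‖ = 1) (hρsym : Measure.map Neg.neg ρ₀ = ρ₀)
    (hwsym : ∀ α, w (-α) = (starRingEnd ℂ) (w α))
    (a : ℝ) (ha : 0 ≤ a) (hsupp : ∀ᵐ α ∂ρ₀, |α| ≤ a)
    (V : EuclideanSpace ℝ (Fin d) → ℝ) (hV : Integrable V)
    (lam : ℂ) (Λ : Set (EuclideanSpace ℝ (Fin d)))
    (hΛbdd : Bornology.IsBounded Λ) (hΛmeas : MeasurableSet Λ) :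
    let M : ℕ → ℂ := fun n =>
      lam ^ n *
        ∫ τ in Set.pi Set.univ (fun _ : Fin n => Set.Icc (0:ℝ) β),
          (∫ α, (∫ α',
            (∫ x in Set.pi Set.univ (fun _ : Fin n => Λ),
              (∫ y in Set.pi Set.univ (fun _ : Fin n => Λ),
                (∏ i, w (α i)) * (∏ i, w (α' i)) * (∏ i, ((V (x i - y i) : ℝ) : ℂ)) *
                  Complex.exp
                    (((-(1/2) * ∑ i, ∑ j,
                        if i ≠ j then α i * α j * S (τ i - τ j) (x i - x j) else 0)
                      + (-(1/2) * ∑ i, ∑ j,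
                        if i ≠ j then α' i * α' j * S (τ i - τ j) (y i - y j) else 0)
                      + (-(1/2) * ∑ i, ∑ j,
                        α i * α' j * S (τ i - τ j) (x i - y j)) : ℝ) : ℂ)))
            ∂(Measure.pi fun _ : Fin n => ρ₀)) ∂(Measure.pi fun _ : Fin n => ρ₀))
    (∀ n : ℕ, ‖M n‖ ≤ ‖lam‖ ^ n * β ^ n * ((ρ₀ Set.univ).toReal) ^ (2 * n) *
        Real.exp (2 * n * a ^ 2 * S 0 0) * (∫ x, |V x|) ^ n * ((volume Λ).toReal) ^ n) ∧
    (Summable fun n : ℕ => ‖M n‖ / n.factorial) ∧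
    ‖∑' n : ℕ, M n / n.factorial‖ ≤
      Real.exp ((‖lam‖ * β * ((ρ₀ Set.univ).toReal) ^ 2 *
        Real.exp (2 * a ^ 2 * S 0 0) * (∫ x, |V x|)) * (volume Λ).toReal) :=
  stmt13_general d β hβ S hSsym hSpd ρ₀ w hw a hsupp V hV lam Λ hΛbdd
end

section
/- Let S be a bounded, real, symmetric, positive-definite kernel on (K_β × ℝ^d)² with S((τ,x),(τ,x)) = S₀ for all (τ,x), and let the Gaussian measure μ₀ with covariance S be given. Then the partition function Z_Λ(λ) = ∑_{n≥0} (λⁿ/n!)·I_n(Λ), where I_n(Λ) is the n-th moment of the local gentle interaction over region Λ and satisfies |I_n(Λ)| ≤ (β·(Var ρ)·e^{a²S₀/2}·|Λ|)ⁿ, defines an entire function of λ ∈ ℂ. -/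
open MeasureTheory Real

/-- given the moments `I n` of the local gentle interaction, whose `n`-th
moment is bounded by `(β·Var(ρ)·e^{a²S₀/2}·|Λ|)ⁿ`, the partition function
`Z_Λ(λ) = ∑ λⁿ/n!·I n` converges for every `λ ∈ ℂ` and is an entire function of `λ`.
(The kernel `S` is a bounded real symmetric positive-definite covariance with constant
diagonal `S₀`, `Var ρ` the total variation of `ρ`, `a` the support bound, `|Λ|` the
Lebesgue measure of `Λ`.) -/
theorem stmt14 (β S0 VarRho a volΛ : ℝ) (hβ : 0 < β) (hVar : 0 ≤ VarRho) (hvol : 0 ≤ volΛ)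
    (hS0 : 0 ≤ S0)
    (I : ℕ → ℂ)
    (hI : ∀ n : ℕ, ‖I n‖ ≤ (β * VarRho * Real.exp (a ^ 2 * S0 / 2) * volΛ) ^ n) :
    (∀ lam : ℂ, Summable fun n : ℕ => lam ^ n / n.factorial * I n) ∧
    ∀ lam : ℂ, AnalyticAt ℂ (fun z : ℂ => ∑' n : ℕ, z ^ n / n.factorial * I n) lam := by
  set C : ℝ := β * VarRho * Real.exp (a ^ 2 * S0 / 2) * volΛ with hC
  have hC0 : 0 ≤ C := by positivity
  -- the coefficient series
  set p : FormalMultilinearSeries ℂ ℂ ℂ :=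
    fun n => (I n / n.factorial) • ContinuousMultilinearMap.mkPiAlgebraFin ℂ n ℂ with hp
  have hpnorm : ∀ n, ‖p n‖ ≤ C ^ n / n.factorial := by
    intro n
    rw [hp]
    have h1 : ‖(I n / (n.factorial : ℂ)) • ContinuousMultilinearMap.mkPiAlgebraFin ℂ n ℂ‖
        = ‖I n / (n.factorial : ℂ)‖ := by
      rw [norm_smul (I n / (n.factorial : ℂ)) (ContinuousMultilinearMap.mkPiAlgebraFin ℂ n ℂ),
        ContinuousMultilinearMap.norm_mkPiAlgebraFin, mul_one]
    rw [h1, norm_div, Complex.norm_natCast]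
    have hfac : (0:ℝ) < (n.factorial : ℝ) := by exact_mod_cast n.factorial_pos
    gcongr
    exact hI n
  have hsum : ∀ r : ℝ, 0 ≤ r → Summable fun n => C ^ n / n.factorial * r ^ n := by
    intro r hr
    have := Real.summable_pow_div_factorial (C * r)
    refine this.congr fun n => ?_
    rw [mul_pow]; ring
  have hrad : p.radius = ⊤ := by
    apply p.radius_eq_top_of_summable_norm
    intro r
    refine Summable.of_nonneg_of_le (fun n => by positivity)
      (fun n => mul_le_mul_of_nonneg_right (hpnorm n) (by positivity)) (hsum r r.coe_nonneg)
  have hball : HasFPowerSeriesOnBall p.sum p 0 ⊤ := by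
    have := p.hasFPowerSeriesOnBall (by rw [hrad]; exact ENNReal.zero_lt_top)
    rwa [hrad] at this
  have hsummable : ∀ lam : ℂ, Summable fun n : ℕ => lam ^ n / n.factorial * I n := by
    intro lam
    apply Summable.of_norm
    have : Summable fun n => C ^ n / n.factorial * ‖lam‖ ^ n := hsum ‖lam‖ (norm_nonneg _)
    refine Summable.of_nonneg_of_le (fun n => norm_nonneg _) (fun n => ?_) this
    rw [norm_mul, norm_div, norm_pow, Complex.norm_natCast]
    have hfac : (0:ℝ) < (n.factorial : ℝ) := by exact_mod_cast n.factorial_pos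
    calc ‖lam‖ ^ n / (n.factorial : ℝ) * ‖I n‖
        ≤ ‖lam‖ ^ n / (n.factorial : ℝ) * C ^ n := by
          exact mul_le_mul_of_nonneg_left (hI n) (by positivity)
      _ = C ^ n / n.factorial * ‖lam‖ ^ n := by ring
  have heq : (fun z : ℂ => ∑' n : ℕ, z ^ n / n.factorial * I n) = p.sum := by
    funext z
    rw [FormalMultilinearSeries.sum]
    congr 1
    funext n
    simp [hp, ContinuousMultilinearMap.mkPiAlgebraFin_apply, List.prod_ofFn, smul_eq_mul]
    ring
  refine ⟨hsummable, fun lam => ?_⟩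
  rw [heq]
  exact hball.analyticOnNhd lam (by simp)
end
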